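/- arXiv:2306.14883 — 3 statements merged into one kernel-verified Lean document; each statement's English description precedes it below -/
import Mathlib

section
/- Let (X, ρ, μ) be a metric triple (Polish metric space with a Borel probability measure of full support) and let M_τ be its matrix distribution on ℝ^{ℕ×ℕ}. Then M_τ is ergodic with respect to the group of finitely supported permutations of ℕ acting by simultaneous permutation of rows and columns: every Borel set A ⊆ ℝ^{ℕ×ℕ} such that for every finitely supported permutation σ of ℕ the preimage of A under (a_{ij}) ↦ (a_{σ(i)σ(j)}) equals A, satisfies M_τ(A) = 0 or M_τ(A) = 1. -/
/-!
The matrix distribution is the image of the i.i.d. measure `μ^{⊗ℕ}` under `x ↦ (ρ(xᵢ, xⱼ))`,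
and permuting rows and columns of the distance matrix by `σ` corresponds to permuting the sample
by `σ`. Hence the preimage `B` of an invariant set is an exchangeable event, and the Hewitt–Savage
zero–one law applies: approximate `B` by a cylinder `C` on the coordinates `[0, n)`; swapping the
blocks `[0, n)` and `[n, 2n)` fixes `B` and moves `C` to an independent copy `D` of itself, so
`P(B) ≈ P(C ∩ D) = P(C) P(D) ≈ P(B)²`.
-/

open MeasureTheory

/-- `P` is the countable product measure `μ^{⊗ℕ}` on the sequence space `ℕ → X`:
a probability measure whose finite-dimensional cylinder marginals are the corresponding
finite products of `μ`.  (These conditions determine `P` uniquely.) -/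
def IsInfiniteProductMeasure {X : Type*} [MeasurableSpace X]
    (μ : Measure X) (P : Measure (ℕ → X)) : Prop :=
  IsProbabilityMeasure P ∧
    ∀ (s : Finset ℕ) (f : ℕ → Set X), (∀ i, MeasurableSet (f i)) →
      P {x | ∀ i ∈ s, x i ∈ f i} = ∏ i ∈ s, μ (f i)

/-- The map sending a sequence of points to its infinite matrix of mutual distances,
an element of `ℝ^{ℕ×ℕ}`. -/
def distMatrixMap (X : Type*) [MetricSpace X] : (ℕ → X) → (ℕ × ℕ → ℝ) :=
  fun x p => dist (x p.1) (x p.2)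

/-- The action of a permutation `σ` of `ℕ` on infinite matrices by simultaneous
permutation of rows and columns: `(a_{ij}) ↦ (a_{σ(i)σ(j)})`. -/
def permuteMatrix (σ : Equiv.Perm ℕ) : (ℕ × ℕ → ℝ) → (ℕ × ℕ → ℝ) :=
  fun a p => a (σ p.1, σ p.2)

open ProbabilityTheory
open scoped symmDiff

section ZeroOne

variable {Ω : Type*} [MeasurableSpace Ω] {P : Measure Ω} [IsProbabilityMeasure P]
  {B C D : Set Ω}

lemma abs_measureReal_sub_sq_le_of_indepSet (hB : MeasurableSet B) (hC : MeasurableSet C)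
    (hD : MeasurableSet D) (hCD : IndepSet C D P) :
    |P.real B - P.real B ^ 2| ≤ 2 * (P.real (B ∆ C) + P.real (B ∆ D)) := by
  have hBCD : B ∆ (C ∩ D) ⊆ B ∆ C ∪ B ∆ D := by
    intro x
    simp only [Set.mem_symmDiff, Set.mem_union, Set.mem_inter_iff]
    tauto
  have hCD_mul : P.real (C ∩ D) = P.real C * P.real D := by
    simp only [measureReal_def, hCD.measure_inter_eq_mul, ENNReal.toReal_mul]
  have hinter : |P.real B - P.real C * P.real D| ≤ P.real (B ∆ C) + P.real (B ∆ D) :=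
    calc |P.real B - P.real C * P.real D| = |P.real B - P.real (C ∩ D)| := by rw [hCD_mul]
      _ ≤ P.real (B ∆ (C ∩ D)) :=
          abs_measureReal_sub_le_measureReal_symmDiff hB.nullMeasurableSet
            (hC.inter hD).nullMeasurableSet
      _ ≤ P.real (B ∆ C) + P.real (B ∆ D) :=
          (measureReal_mono hBCD).trans (measureReal_union_le _ _)
  have hBC := abs_measureReal_sub_le_measureReal_symmDiff (μ := P) hB.nullMeasurableSet
    hC.nullMeasurableSet
  have hBD := abs_measureReal_sub_le_measureReal_symmDiff (μ := P) hB.nullMeasurableSet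
    hD.nullMeasurableSet
  -- `c d - b² = (c - b) d + b (d - b)` with `0 ≤ b, d ≤ 1`
  have hprod : |P.real C * P.real D - P.real B ^ 2| ≤ P.real (B ∆ C) + P.real (B ∆ D) := by
    have := measureReal_le_one (μ := P) (s := B)
    have := measureReal_le_one (μ := P) (s := D)
    have := measureReal_nonneg (μ := P) (s := B)
    have := measureReal_nonneg (μ := P) (s := D)
    rw [abs_le] at hBC hBD ⊢
    constructor <;> nlinarith
  linarith [abs_sub_le (P.real B) (P.real C * P.real D) (P.real B ^ 2)]

lemma measure_eq_zero_or_one_of_forall_indepSet_approx (hB : MeasurableSet B)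
    (h : ∀ ε > 0, ∃ C D, MeasurableSet C ∧ MeasurableSet D ∧ IndepSet C D P ∧
      P.real (B ∆ C) ≤ ε ∧ P.real (B ∆ D) ≤ ε) :
    P B = 0 ∨ P B = 1 := by
  have hsq : P.real B ^ 2 = P.real B := by
    refine eq_of_forall_dist_le fun ε hε => ?_
    obtain ⟨C, D, hC, hD, hCD, hBC, hBD⟩ := h (ε / 4) (by positivity)
    rw [Real.dist_eq, abs_sub_comm]
    linarith [abs_measureReal_sub_sq_le_of_indepSet hB hC hD hCD]
  refine (eq_zero_or_one_of_sq_eq_self hsq).imp (fun h0 => ?_) (fun h1 => ?_)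
  · exact (measureReal_eq_zero_iff).mp h0
  · exact (ENNReal.toReal_eq_one_iff _).mp h1

end ZeroOne

def blockSwap (n : ℕ) : Equiv.Perm ℕ :=
  Function.Involutive.toPerm (fun i => if i < n then i + n else if i < 2 * n then i - n else i)
    fun i => by dsimp only; split_ifs <;> omega

lemma blockSwap_apply (n i : ℕ) :
    blockSwap n i = if i < n then i + n else if i < 2 * n then i - n else i := rfl

lemma finite_blockSwap_support (n : ℕ) : {i | blockSwap n i ≠ i}.Finite :=
  (Set.finite_Iio (2 * n)).subset fun i (hi : blockSwap n i ≠ i) => by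
    rw [blockSwap_apply] at hi
    rw [Set.mem_Iio]
    split_ifs at hi <;> omega

lemma disjoint_image_blockSwap {n : ℕ} {s : Finset ℕ} (hs : s ⊆ Finset.range n) :
    Disjoint s (s.image (blockSwap n)) := by
  rw [Finset.disjoint_right]
  rintro _ hj hj'
  obtain ⟨i, hi, rfl⟩ := Finset.mem_image.mp hj
  have hin := Finset.mem_range.mp (hs hi)
  have := Finset.mem_range.mp (hs hj')
  rw [blockSwap_apply, if_pos hin] at this
  omega

lemma ProbabilityTheory.iIndepFun.indepFun_finset_comp {ι Ω β : Type*} [DecidableEq ι]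
    [MeasurableSpace Ω] [MeasurableSpace β] {P : Measure Ω} {f : ι → Ω → β} (hf : iIndepFun f P)
    (hmeas : ∀ i, Measurable (f i)) {s : Finset ι} {g : ι → ι}
    (hs : Disjoint s (s.image g)) :
    IndepFun (fun ω (i : s) => f i ω) (fun ω (i : s) => f (g i) ω) P :=
  (hf.indepFun_finset s (s.image g) hs hmeas).comp measurable_id
    (measurable_pi_lambda
      (fun (y : s.image g → β) (i : s) => y ⟨g i, Finset.mem_image_of_mem g i.2⟩)
      fun _ => measurable_pi_apply _)

open Measure in
theorem infinitePi_eq_zero_or_one_of_perm_invariant {X : Type*} [MeasurableSpace X]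
    (μ : Measure X) [IsProbabilityMeasure μ] {B : Set (ℕ → X)} (hB : MeasurableSet B)
    (hinv : ∀ σ : Equiv.Perm ℕ, {i | σ i ≠ i}.Finite → (fun x i => x (σ i)) ⁻¹' B = B) :
    infinitePi (fun _ => μ) B = 0 ∨ infinitePi (fun _ => μ) B = 1 := by
  set ν := infinitePi fun _ : ℕ => μ
  have hdense : ν.MeasureDense (measurableCylinders fun _ => X) :=
    .of_generateFrom_isSetAlgebra_finite ν isSetAlgebra_measurableCylinders
      generateFrom_measurableCylinders.symm
  refine measure_eq_zero_or_one_of_forall_indepSet_approx hB fun ε hε => ?_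
  obtain ⟨C, hCcyl, -, hBC⟩ := hdense.fin_meas_approx hB (measure_ne_top ν B) ε hε
  obtain ⟨s, S, hS, rfl⟩ := (mem_measurableCylinders C).mp hCcyl
  have hBC' : ν.real (B ∆ cylinder s S) ≤ ε := (ENNReal.toReal_lt_of_lt_ofReal hBC).le
  obtain ⟨n, hn⟩ := s.exists_nat_subset_range
  set T : (ℕ → X) → (ℕ → X) := fun x i => x (blockSwap n i)
  have hT : MeasurePreserving T ν ν :=
    ⟨by fun_prop, map_infinitePi_infinitePi_of_inj (blockSwap n).injective⟩
  have hindep : IndepFun (fun x (i : s) => x i) (fun x (i : s) => x (blockSwap n i)) ν :=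
    (iIndepFun_infinitePi (X := fun _ x => x) fun _ => measurable_id).indepFun_finset_comp
      (fun _ => measurable_pi_apply _) (disjoint_image_blockSwap hn)
  refine ⟨cylinder s S, T ⁻¹' cylinder s S, hS.cylinder, hT.measurable hS.cylinder,
    (indepFun_iff_indepSet_preimage (by fun_prop) (by fun_prop)).mp hindep S S hS hS, hBC', ?_⟩
  rwa [← hinv _ (finite_blockSwap_support n), ← Set.preimage_symmDiff,
    hT.measureReal_preimage (hB.symmDiff hS.cylinder).nullMeasurableSet]

lemma measurable_distMatrixMap (X : Type*) [MetricSpace X] [TopologicalSpace.SeparableSpace X]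
    [MeasurableSpace X] [BorelSpace X] : Measurable (distMatrixMap X) :=
  measurable_pi_lambda _ fun _ => (measurable_pi_apply _).dist (measurable_pi_apply _)

lemma IsInfiniteProductMeasure.eq_infinitePi {X : Type*} [MeasurableSpace X] {μ : Measure X}
    [IsProbabilityMeasure μ] {P : Measure (ℕ → X)} (hP : IsInfiniteProductMeasure μ P) :
    P = Measure.infinitePi fun _ => μ :=
  Measure.eq_infinitePi _ hP.2

theorem matrixDistribution_ergodic_general
    {X : Type*} [MetricSpace X] [TopologicalSpace.SeparableSpace X]
    [MeasurableSpace X] [BorelSpace X]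
    (μ : Measure X) [IsProbabilityMeasure μ]
    (P : Measure (ℕ → X)) (hP : IsInfiniteProductMeasure μ P)
    (A : Set (ℕ × ℕ → ℝ)) (hA : MeasurableSet A)
    (hinv : ∀ σ : Equiv.Perm ℕ, {i | σ i ≠ i}.Finite → permuteMatrix σ ⁻¹' A = A) :
    P.map (distMatrixMap X) A = 0 ∨ P.map (distMatrixMap X) A = 1 := by
  rw [Measure.map_apply (measurable_distMatrixMap X) hA, hP.eq_infinitePi]
  exact infinitePi_eq_zero_or_one_of_perm_invariant μ (measurable_distMatrixMap X hA)
    fun σ hσ => congrArg (distMatrixMap X ⁻¹' ·) (hinv σ hσ)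

/-- The matrix distribution of a metric triple is ergodic with respect to the group of
finitely supported permutations of `ℕ` acting by simultaneous permutation of rows and
columns: any Borel set invariant under all such permutations has measure `0` or `1`. -/
theorem matrixDistribution_ergodic
    {X : Type*} [MetricSpace X] [TopologicalSpace.SeparableSpace X] [CompleteSpace X]
    [MeasurableSpace X] [BorelSpace X]
    (μ : Measure X) [IsProbabilityMeasure μ] [μ.IsOpenPosMeasure]
    (P : Measure (ℕ → X)) (hP : IsInfiniteProductMeasure μ P)
    (A : Set (ℕ × ℕ → ℝ)) (hA : MeasurableSet A)
    (hinv : ∀ σ : Equiv.Perm ℕ, {i | σ i ≠ i}.Finite → permuteMatrix σ ⁻¹' A = A) :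
    P.map (distMatrixMap X) A = 0 ∨ P.map (distMatrixMap X) A = 1 :=
  matrixDistribution_ergodic_general μ P hP A hA hinv
end

section
/- For every c > 0 and every s ≥ 0, the Laplace transform of the Lévy distribution with parameter c satisfies ∫_0^∞ e^{−s x} · √(c/(2π)) x^{−3/2} exp(−c/(2x)) dx = exp(−√(2 c s)). -/
open MeasureTheory Real

/-- The density of the Lévy distribution with parameter `c > 0`:
`x ↦ √(c/(2π)) x^(−3/2) exp(−c/(2x))` for `x > 0` and `0` for `x ≤ 0`. -/
noncomputable def levyDensity (c : ℝ) (x : ℝ) : ℝ :=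
  if 0 < x then Real.sqrt (c / (2 * Real.pi)) * x ^ (-(3 / 2 : ℝ)) * Real.exp (-c / (2 * x))
  else 0

/-- The Lévy distribution with parameter `c > 0`, as a measure on `ℝ`. -/
noncomputable def levyMeasure (c : ℝ) : Measure ℝ :=
  volume.withDensity fun x => ENNReal.ofReal (levyDensity c x)

/-!
Substituting `x = u⁻²` reduces the claim to
`∫₀^∞ exp (-(p u² + q / u²)) du = ½ √(π / p) e^{-2√(pq)}` with `p = c / 2`, `q = s`.
Write `p = a²`, `q = b²`. The Cauchy–Schlömilch substitution `v = a t - b / t` maps `(0, ∞)`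
onto `ℝ`, with `dv = (a + b / t²) dt` and `v² = a² t² + b² / t² - 2ab`, so
`∫₀^∞ (a + b / t²) exp (-(a² t² + b² / t²)) dt = √π e^{-2ab}`.
The involution `t ↦ b / (a t)` preserves `exp (-(a² t² + b² / t²))` and exchanges the `a`
and `b / t²` parts of this integral, which are therefore equal.
-/

open Set

variable {F : Type*} [NormedAddCommGroup F] [NormedSpace ℝ F]

section ConstDiv

variable {k : ℝ}

lemma image_const_div_Ioi_zero (hk : 0 < k) : (k / ·) '' Ioi (0 : ℝ) = Ioi 0 := by
  ext t
  exact ⟨fun ⟨u, hu, htu⟩ => htu ▸ div_pos hk hu,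
    fun ht => ⟨k / t, div_pos hk ht, div_div_cancel₀ hk.ne'⟩⟩

lemma hasDerivAt_const_div {u : ℝ} (hu : u ≠ 0) : HasDerivAt (k / ·) (-(k / u ^ 2)) u := by
  simpa [div_eq_mul_inv] using (hasDerivAt_inv hu).const_mul k

lemma strictAntiOn_const_div_Ioi_zero (hk : 0 < k) : StrictAntiOn (k / ·) (Ioi (0 : ℝ)) :=
  fun _ hu _ _ huv => div_lt_div_of_pos_left hk hu huv

lemma integral_Ioi_comp_const_div (hk : 0 < k) (f : ℝ → F) :
    ∫ u in Ioi 0, (k / u ^ 2) • f (k / u) = ∫ t in Ioi 0, f t := by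
  have := integral_image_eq_integral_abs_deriv_smul measurableSet_Ioi
    (fun u hu => (hasDerivAt_const_div (ne_of_gt hu)).hasDerivWithinAt)
    (strictAntiOn_const_div_Ioi_zero hk).injOn f
  rw [image_const_div_Ioi_zero hk] at this
  rw [this]
  refine setIntegral_congr_fun measurableSet_Ioi fun u (hu : 0 < u) => ?_
  rw [abs_neg, abs_of_pos (by positivity)]

lemma integrableOn_Ioi_comp_const_div_iff (hk : 0 < k) (f : ℝ → F) :
    IntegrableOn (fun u => (k / u ^ 2) • f (k / u)) (Ioi 0) ↔ IntegrableOn f (Ioi 0) := by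
  have := integrableOn_image_iff_integrableOn_abs_deriv_smul measurableSet_Ioi
    (fun u hu => (hasDerivAt_const_div (ne_of_gt hu)).hasDerivWithinAt)
    (strictAntiOn_const_div_Ioi_zero hk).injOn f
  rw [image_const_div_Ioi_zero hk] at this
  rw [this]
  refine integrableOn_congr_fun (fun u (hu : 0 < u) => ?_) measurableSet_Ioi
  rw [abs_neg, abs_of_pos (by positivity)]

end ConstDiv

section CauchySchlomilch

variable {a b : ℝ}

lemma hasDerivAt_mul_sub_div {t : ℝ} (ht : t ≠ 0) :
    HasDerivAt (fun t => a * t - b / t) (a + b / t ^ 2) t := by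
  simpa using ((hasDerivAt_id' t).const_mul a).fun_sub (hasDerivAt_const_div (k := b) ht)

lemma strictMonoOn_mul_sub_div (ha : 0 < a) (hb : 0 < b) :
    StrictMonoOn (fun t => a * t - b / t) (Ioi 0) := fun t (ht : 0 < t) u _ htu => by
  have : b / u < b / t := div_lt_div_of_pos_left hb ht htu
  dsimp only
  nlinarith

lemma image_mul_sub_div_Ioi_zero (ha : 0 < a) (hb : 0 < b) :
    (fun t => a * t - b / t) '' Ioi 0 = univ := by
  refine eq_univ_of_forall fun y => ?_
  set d := √(y ^ 2 + 4 * a * b)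
  have hd : d ^ 2 = y ^ 2 + 4 * a * b := sq_sqrt (by positivity)
  have hyd : |y| < d := by
    rw [← sqrt_sq_eq_abs]
    exact sqrt_lt_sqrt (sq_nonneg y) (by nlinarith)
  -- the positive root of `a t ^ 2 - y t - b`
  set t := (y + d) / (2 * a)
  have ht : 0 < t := div_pos (by linarith [neg_abs_le y]) (by positivity)
  have hroot : a * t ^ 2 = y * t + b := by
    simp only [t]
    field_simp
    nlinarith
  refine ⟨t, ht, ?_⟩
  field_simp
  linarith

theorem integral_Ioi_comp_mul_sub_div (ha : 0 < a) (hb : 0 < b) (f : ℝ → F) :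
    ∫ t in Ioi 0, (a + b / t ^ 2) • f (a * t - b / t) = ∫ v, f v := by
  have := integral_image_eq_integral_abs_deriv_smul measurableSet_Ioi
    (fun t ht => (hasDerivAt_mul_sub_div (ne_of_gt ht)).hasDerivWithinAt)
    (strictMonoOn_mul_sub_div ha hb).injOn f
  rw [image_mul_sub_div_Ioi_zero ha hb, setIntegral_univ] at this
  rw [this]
  refine setIntegral_congr_fun measurableSet_Ioi fun t (ht : 0 < t) => ?_
  rw [abs_of_pos (by positivity)]

end CauchySchlomilch

section ExpNegSqAddDivSq

variable {a b : ℝ}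

lemma integrableOn_exp_neg_sq_add_div_sq (ha : a ≠ 0) (b : ℝ) :
    IntegrableOn (fun t => exp (-(a ^ 2 * t ^ 2 + b ^ 2 / t ^ 2))) (Ioi 0) := by
  refine (integrable_exp_neg_mul_sq (by positivity : 0 < a ^ 2)).integrableOn.mono'
    (by fun_prop : Measurable _).aestronglyMeasurable (Filter.Eventually.of_forall fun t => ?_)
  rw [norm_of_nonneg (exp_pos _).le, neg_mul]
  gcongr
  exact le_add_of_nonneg_right (by positivity)

lemma div_sq_mul_exp_neg_sq_add_div_sq (ha : a ≠ 0) (hb : b ≠ 0) {t : ℝ} (ht : t ≠ 0) :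
    b / t ^ 2 * exp (-(a ^ 2 * t ^ 2 + b ^ 2 / t ^ 2))
      = a * ((b / a / t ^ 2) • exp (-(a ^ 2 * (b / a / t) ^ 2 + b ^ 2 / (b / a / t) ^ 2))) := by
  have : a ^ 2 * (b / a / t) ^ 2 + b ^ 2 / (b / a / t) ^ 2 = a ^ 2 * t ^ 2 + b ^ 2 / t ^ 2 := by
    field_simp
    ring
  rw [this, smul_eq_mul]
  field_simp

lemma integrableOn_div_sq_mul_exp_neg_sq_add_div_sq (ha : 0 < a) (hb : 0 < b) :
    IntegrableOn (fun t => b / t ^ 2 * exp (-(a ^ 2 * t ^ 2 + b ^ 2 / t ^ 2))) (Ioi 0) := by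
  have := ((integrableOn_Ioi_comp_const_div_iff (div_pos hb ha) _).2
    (integrableOn_exp_neg_sq_add_div_sq ha.ne' b)).const_mul a
  refine IntegrableOn.congr_fun this (fun t (ht : 0 < t) => ?_) measurableSet_Ioi
  rw [div_sq_mul_exp_neg_sq_add_div_sq ha.ne' hb.ne' ht.ne']

lemma integral_div_sq_mul_exp_neg_sq_add_div_sq (ha : 0 < a) (hb : 0 < b) :
    ∫ t in Ioi 0, b / t ^ 2 * exp (-(a ^ 2 * t ^ 2 + b ^ 2 / t ^ 2))
      = a * ∫ t in Ioi 0, exp (-(a ^ 2 * t ^ 2 + b ^ 2 / t ^ 2)) := by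
  rw [← integral_Ioi_comp_const_div (div_pos hb ha)
    fun t => exp (-(a ^ 2 * t ^ 2 + b ^ 2 / t ^ 2)), ← integral_const_mul]
  refine setIntegral_congr_fun measurableSet_Ioi fun t (ht : 0 < t) => ?_
  rw [div_sq_mul_exp_neg_sq_add_div_sq ha.ne' hb.ne' ht.ne']

lemma integral_add_div_sq_mul_exp_neg_sq_add_div_sq (ha : 0 < a) (hb : 0 < b) :
    ∫ t in Ioi 0, (a + b / t ^ 2) * exp (-(a ^ 2 * t ^ 2 + b ^ 2 / t ^ 2))
      = √π * exp (-(2 * a * b)) := by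
  have hgauss : ∫ v, exp (-v ^ 2) = √π := by simpa using integral_gaussian 1
  rw [← hgauss, ← integral_Ioi_comp_mul_sub_div ha hb, ← integral_mul_const]
  refine setIntegral_congr_fun measurableSet_Ioi fun t (ht : 0 < t) => ?_
  have : a ^ 2 * t ^ 2 + b ^ 2 / t ^ 2 = (a * t - b / t) ^ 2 + 2 * a * b := by
    field_simp
    ring
  rw [this, neg_add, exp_add, smul_eq_mul]
  ring

theorem integral_exp_neg_mul_sq_add_div_sq {p q : ℝ} (hp : 0 < p) (hq : 0 ≤ q) :
    ∫ t in Ioi 0, exp (-(p * t ^ 2 + q / t ^ 2)) = √(π / p) / 2 * exp (-(2 * √(p * q))) := by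
  rcases hq.eq_or_lt with rfl | hq
  · simpa [← neg_mul] using integral_gaussian_Ioi p
  obtain ⟨a, ha, rfl⟩ : ∃ a, 0 < a ∧ a ^ 2 = p := ⟨√p, sqrt_pos.2 hp, sq_sqrt hp.le⟩
  obtain ⟨b, hb, rfl⟩ : ∃ b, 0 < b ∧ b ^ 2 = q := ⟨√q, sqrt_pos.2 hq, sq_sqrt hq.le⟩
  have hsplit := integral_add_div_sq_mul_exp_neg_sq_add_div_sq ha hb
  simp_rw [add_mul] at hsplit
  rw [integral_add ((integrableOn_exp_neg_sq_add_div_sq ha.ne' b).const_mul a)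
    (integrableOn_div_sq_mul_exp_neg_sq_add_div_sq ha hb), integral_const_mul,
    integral_div_sq_mul_exp_neg_sq_add_div_sq ha hb] at hsplit
  rw [← mul_pow, sqrt_sq (by positivity), sqrt_div' _ (sq_nonneg a), sqrt_sq ha.le, ← mul_assoc,
    div_div, div_mul_eq_mul_div, eq_div_iff (by positivity)]
  linarith

end ExpNegSqAddDivSq

lemma levy_integrand_comp_rpow_neg_two (c s : ℝ) {u : ℝ} (hu : 0 < u) :
    (|(-2 : ℝ)| * u ^ ((-2 : ℝ) - 1)) • (exp (-s * u ^ (-2 : ℝ)) *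
      (√(c / (2 * π)) * (u ^ (-2 : ℝ)) ^ (-(3 / 2 : ℝ)) * exp (-c / (2 * u ^ (-2 : ℝ)))))
      = 2 * √(c / (2 * π)) * exp (-(c / 2 * u ^ 2 + s / u ^ 2)) := by
  have hinv : u ^ (-2 : ℝ) = (u ^ 2)⁻¹ := by rw [rpow_neg hu.le, rpow_two]
  have hcube : (u ^ (-2 : ℝ)) ^ (-(3 / 2 : ℝ)) = u ^ 3 := by
    rw [← rpow_mul hu.le]
    norm_num
  have hcube_inv : u ^ ((-2 : ℝ) - 1) = (u ^ 3)⁻¹ := by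
    rw [show (-2 : ℝ) - 1 = -(3 : ℕ) by norm_num, rpow_neg hu.le, rpow_natCast]
  have hexp : exp (-s * (u ^ 2)⁻¹) * exp (-c / (2 * (u ^ 2)⁻¹))
      = exp (-(c / 2 * u ^ 2 + s / u ^ 2)) := by
    rw [← exp_add]
    congr 1
    field_simp
    ring
  rw [hcube, hcube_inv, hinv, ← hexp, abs_neg, abs_two, smul_eq_mul]
  field_simp

/-- Laplace transform of the Lévy distribution:
`∫_0^∞ e^{−sx} √(c/(2π)) x^{−3/2} e^{−c/(2x)} dx = exp(−√(2cs))`. -/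
theorem levy_laplace_transform (c : ℝ) (hc : 0 < c) (s : ℝ) (hs : 0 ≤ s) :
    (∫ x in Set.Ioi (0 : ℝ),
        Real.exp (-s * x) *
          (Real.sqrt (c / (2 * Real.pi)) * x ^ (-(3 / 2 : ℝ)) * Real.exp (-c / (2 * x))))
      = Real.exp (-Real.sqrt (2 * c * s)) := by
  rw [← integral_comp_rpow_Ioi _ (by norm_num : (-2 : ℝ) ≠ 0),
    setIntegral_congr_fun measurableSet_Ioi fun u (hu : 0 < u) =>
      levy_integrand_comp_rpow_neg_two c s hu, integral_const_mul,
    integral_exp_neg_mul_sq_add_div_sq (by positivity) hs]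
  have hnorm : √(c / (2 * π)) * √(π / (c / 2)) = 1 := by
    rw [← sqrt_mul (by positivity), sqrt_eq_one]
    field_simp
  have hexponent : 2 * √(c / 2 * s) = √(2 * c * s) := by
    rw [← sqrt_sq zero_le_two, ← sqrt_mul (sq_nonneg 2)]
    ring_nf
  rw [← hexponent]
  linear_combination exp (-(2 * √(c / 2 * s))) * hnorm
end

section
/- Let X be a nonnegative real random variable and a > 0 a constant such that √t · P(X > t) → a as t → ∞. Then (1 − E[e^{−s X}]) / √s → a √π as s → 0⁺. -/
/-!
By the layer cake formula, `1 - E[e^{-sX}] = ∫₀^∞ e^{-v} P(X > v/s) dv`. Dividing by `s^α` and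
writing the integrand as `e^{-v} v^{-α} · (v/s)^α P(X > v/s)`, the second factor is bounded and
tends to `a` as `s → 0⁺`, so dominated convergence gives the limit `a ∫₀^∞ e^{-v} v^{-α} dv =
a Γ(1 - α)`, which is `a √π` for `α = 1/2`.
-/

open MeasureTheory Real Filter Set Topology

lemma intervalIntegral_exp_neg (y : ℝ) : ∫ t in 0..y, exp (-t) = 1 - exp (-y) := by
  rw [intervalIntegral.integral_comp_neg (fun t => exp t), integral_exp, neg_zero, exp_zero]

lemma antitone_measureReal_lt {Ω : Type*} [MeasurableSpace Ω] (μ : Measure Ω) [IsFiniteMeasure μ]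
    (Y : Ω → ℝ) : Antitone fun t => μ.real {ω | t < Y ω} :=
  fun _ _ h => measureReal_mono fun _ hω => h.trans_lt hω

theorem integral_one_sub_exp_neg_eq_integral_exp_neg_mul_measureReal_lt
    {Ω : Type*} [MeasurableSpace Ω] {μ : Measure Ω} [IsFiniteMeasure μ] {Y : Ω → ℝ}
    (hY : AEMeasurable Y μ) (hY_nonneg : 0 ≤ᵐ[μ] Y) :
    ∫ ω, (1 - exp (-Y ω)) ∂μ = ∫ t in Ioi 0, exp (-t) * μ.real {ω | t < Y ω} := by
  have layercake := lintegral_comp_eq_lintegral_meas_lt_mul μ hY_nonneg hY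
    (fun t _ => (continuous_exp.comp continuous_neg).intervalIntegrable 0 t)
    (ae_of_all _ fun t => (exp_pos (-t)).le)
  simp only [Function.comp_apply, intervalIntegral_exp_neg] at layercake
  rw [integral_eq_lintegral_of_nonneg_ae, integral_eq_lintegral_of_nonneg_ae, layercake]
  · congr 1
    refine setLIntegral_congr_fun measurableSet_Ioi fun t _ => ?_
    rw [ENNReal.ofReal_mul (exp_pos _).le, ofReal_measureReal, mul_comm]
  · exact ae_of_all _ fun t => mul_nonneg (exp_pos _).le measureReal_nonneg
  · exact ((continuous_exp.comp continuous_neg).measurable.mul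
      (antitone_measureReal_lt μ Y).measurable).aestronglyMeasurable
  · filter_upwards [hY_nonneg] with ω hω
    simpa using hω
  · exact (hY.neg.exp.const_sub 1).aestronglyMeasurable

theorem one_sub_integral_exp_neg_mul_eq {Ω : Type*} [MeasurableSpace Ω] {P : Measure Ω}
    [IsProbabilityMeasure P] {X : Ω → ℝ} (hX : AEMeasurable X P) (hX_nonneg : 0 ≤ᵐ[P] X)
    {s : ℝ} (hs : 0 < s) :
    1 - ∫ ω, exp (-s * X ω) ∂P = ∫ v in Ioi 0, exp (-v) * P.real {ω | v / s < X ω} := by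
  have h_int : Integrable (fun ω => exp (-(s * X ω))) P := by
    refine Integrable.of_bound (C := 1) (hX.const_mul s).neg.exp.aestronglyMeasurable ?_
    filter_upwards [hX_nonneg] with ω hω
    rw [norm_of_nonneg (exp_pos _).le, exp_le_one_iff, neg_nonpos]
    exact mul_nonneg hs.le hω
  have h_sets : ∀ v, {ω | v < s * X ω} = {ω | v / s < X ω} := fun v => by
    ext ω; simp [div_lt_iff₀' hs]
  have h_one_sub : 1 - ∫ ω, exp (-s * X ω) ∂P = ∫ ω, (1 - exp (-(s * X ω))) ∂P := by
    simp only [neg_mul, integral_sub (integrable_const 1) h_int, integral_const, probReal_univ,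
      one_smul]
  rw [h_one_sub, integral_one_sub_exp_neg_eq_integral_exp_neg_mul_measureReal_lt
    (hX.const_mul s) (by filter_upwards [hX_nonneg] with ω hω using mul_nonneg hs.le hω)]
  simp only [h_sets]

section Abelian

variable {g : ℝ → ℝ} {α a C : ℝ}

lemma exists_forall_pos_abs_rpow_mul_le_of_tendsto (hα : 0 ≤ α) (hC : ∀ t, |g t| ≤ C)
    (hlim : Tendsto (fun t => t ^ α * g t) atTop (𝓝 a)) :
    ∃ M, ∀ t, 0 < t → |t ^ α * g t| ≤ M := by
  obtain ⟨T, hT⟩ := eventually_atTop.mp (hlim.abs.eventually_le_const (lt_add_one |a|))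
  refine ⟨max (|a| + 1) (T ^ α * C), fun t ht => ?_⟩
  rcases le_or_gt T t with hTt | htT
  · exact le_max_of_le_left (hT t hTt)
  · refine le_max_of_le_right ?_
    rw [abs_mul, abs_of_pos (rpow_pos_of_pos ht α)]
    exact mul_le_mul (rpow_le_rpow ht.le htT.le hα) (hC t) (abs_nonneg _)
      (rpow_nonneg (ht.trans htT).le α)

lemma exp_neg_mul_comp_div_div_rpow_eq {s v : ℝ} (hs : 0 < s) (hv : 0 < v) :
    exp (-v) * g (v / s) / s ^ α = exp (-v) * v ^ (1 - α - 1) * ((v / s) ^ α * g (v / s)) := by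
  have := rpow_pos_of_pos hv α
  have := rpow_pos_of_pos hs α
  rw [sub_sub_cancel_left, rpow_neg hv.le, div_rpow hv.le hs.le]
  field_simp

theorem tendsto_integral_exp_neg_mul_comp_div_div_rpow (hα₀ : 0 ≤ α) (hα₁ : α < 1)
    (hg : Measurable g) (hC : ∀ t, |g t| ≤ C)
    (hlim : Tendsto (fun t => t ^ α * g t) atTop (𝓝 a)) :
    Tendsto (fun s => (∫ v in Ioi 0, exp (-v) * g (v / s)) / s ^ α) (𝓝[>] 0)
      (𝓝 (a * Gamma (1 - α))) := by
  obtain ⟨M, hM⟩ := exists_forall_pos_abs_rpow_mul_le_of_tendsto hα₀ hC hlim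
  -- the kernel of the Gamma integral for `Γ(1 - α)`
  set k : ℝ → ℝ := fun v => exp (-v) * v ^ (1 - α - 1)
  have hk_nonneg : ∀ v, 0 < v → 0 ≤ k v := fun v hv => by positivity
  have hk_int : IntegrableOn k (Ioi 0) := GammaIntegral_convergent (by linarith)
  have h_gamma : ∫ v in Ioi 0, k v * a = a * Gamma (1 - α) := by
    rw [integral_mul_const, Gamma_eq_integral (by linarith), mul_comm]
  rw [← h_gamma]
  simp only [← integral_div]
  refine tendsto_integral_filter_of_dominated_convergence (fun v => k v * M) ?_ ?_
    (hk_int.mul_const M) ?_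
  · exact Eventually.of_forall fun s => by fun_prop
  · filter_upwards [self_mem_nhdsWithin] with s (hs : 0 < s)
    refine (ae_restrict_iff' measurableSet_Ioi).mpr (ae_of_all _ fun v (hv : 0 < v) => ?_)
    rw [exp_neg_mul_comp_div_div_rpow_eq hs hv, norm_mul, norm_of_nonneg (hk_nonneg v hv)]
    exact mul_le_mul_of_nonneg_left (hM _ (div_pos hv hs)) (hk_nonneg v hv)
  · refine (ae_restrict_iff' measurableSet_Ioi).mpr (ae_of_all _ fun v (hv : 0 < v) => ?_)
    have h_div : Tendsto (fun s => v / s) (𝓝[>] 0) atTop :=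
      tendsto_inv_nhdsGT_zero.const_mul_atTop hv
    refine ((hlim.comp h_div).const_mul (k v)).congr' ?_
    filter_upwards [self_mem_nhdsWithin] with s (hs : 0 < s)
    exact (exp_neg_mul_comp_div_div_rpow_eq hs hv).symm

end Abelian

theorem laplace_transform_tail_asymptotic_general
    {Ω : Type*} [MeasurableSpace Ω] (P : Measure Ω) [IsProbabilityMeasure P]
    (X : Ω → ℝ) (hX : Measurable X) (hpos : ∀ ω, 0 ≤ X ω)
    (a : ℝ)
    (htail : Filter.Tendsto (fun t : ℝ => Real.sqrt t * (P {ω | t < X ω}).toReal)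
      Filter.atTop (nhds a)) :
    Filter.Tendsto
      (fun s : ℝ => (1 - ∫ ω, Real.exp (-s * X ω) ∂P) / Real.sqrt s)
      (nhdsWithin 0 (Set.Ioi 0)) (nhds (a * Real.sqrt Real.pi)) := by
  have h_tail_bdd : ∀ t, |P.real {ω | t < X ω}| ≤ 1 := fun t => by
    rw [abs_of_nonneg measureReal_nonneg]
    exact measureReal_le_one
  simp only [sqrt_eq_rpow, ← measureReal_def] at htail ⊢
  have h_abel := tendsto_integral_exp_neg_mul_comp_div_div_rpow (by norm_num) (by norm_num)
    (antitone_measureReal_lt P X).measurable h_tail_bdd htail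
  rw [show (1 : ℝ) - 1 / 2 = 1 / 2 by norm_num, Gamma_one_half_eq, sqrt_eq_rpow] at h_abel
  refine h_abel.congr' ?_
  filter_upwards [self_mem_nhdsWithin] with s (hs : 0 < s)
  rw [one_sub_integral_exp_neg_mul_eq hX.aemeasurable (ae_of_all _ hpos) hs]

/-- Tauberian-type statement: if `X ≥ 0` and `√t · P(X > t) → a > 0` as `t → ∞`, then
`(1 − E[e^{−sX}])/√s → a√π` as `s → 0⁺`. -/
theorem laplace_transform_tail_asymptotic
    {Ω : Type*} [MeasurableSpace Ω] (P : Measure Ω) [IsProbabilityMeasure P]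
    (X : Ω → ℝ) (hX : Measurable X) (hpos : ∀ ω, 0 ≤ X ω)
    (a : ℝ) (ha : 0 < a)
    (htail : Filter.Tendsto (fun t : ℝ => Real.sqrt t * (P {ω | t < X ω}).toReal)
      Filter.atTop (nhds a)) :
    Filter.Tendsto
      (fun s : ℝ => (1 - ∫ ω, Real.exp (-s * X ω) ∂P) / Real.sqrt s)
      (nhdsWithin 0 (Set.Ioi 0)) (nhds (a * Real.sqrt Real.pi)) :=
  laplace_transform_tail_asymptotic_general P X hX hpos a htail
end
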